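/- arXiv:1210.4359 — 4 statements merged into one kernel-verified Lean document; each statement's English description precedes it below -/
import Mathlib

section
/- Let A, A', B, B' be positive semidefinite complex matrices over the same finite index type with A' ≥ A and B' ≥ B. Then ‖√A'·√B'‖ ≥ ‖√A·√B‖. -/
open Matrix ComplexOrder

set_option maxHeartbeats 1000000
set_option synthInstance.maxHeartbeats 400000

/-- The Schatten ∞-norm of a square complex matrix: the operator norm induced by the
Euclidean norm (the largest singular value). -/
noncomputable def opNorm {n : Type*} [Fintype n] [DecidableEq n] (M : Matrix n n ℂ) : ℝ :=
  ‖Matrix.toEuclideanCLM (𝕜 := ℂ) M‖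

/-- The square root of a positive semidefinite matrix, as defined in Mathlib (Dec 2024),
removed since. -/
noncomputable def Matrix.PosSemidef.sqrt {n 𝕜 : Type*} [Fintype n] [RCLike 𝕜] [DecidableEq n]
    {A : Matrix n n 𝕜} (hA : A.PosSemidef) : Matrix n n 𝕜 :=
  hA.1.eigenvectorUnitary.1 * diagonal ((↑) ∘ Real.sqrt ∘ hA.1.eigenvalues) *
    (star hA.1.eigenvectorUnitary : Matrix n n 𝕜)

lemma Matrix.PosSemidef.posSemidef_sqrt {n 𝕜 : Type*} [Fintype n] [RCLike 𝕜] [DecidableEq n]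
    {A : Matrix n n 𝕜} (hA : A.PosSemidef) : hA.sqrt.PosSemidef := by
  unfold Matrix.PosSemidef.sqrt
  rw [star_eq_conjTranspose]
  refine PosSemidef.mul_mul_conjTranspose_same (PosSemidef.diagonal ?_) _
  intro i
  simp [Real.sqrt_nonneg]

lemma Matrix.PosSemidef.sqrt_mul_self {n 𝕜 : Type*} [Fintype n] [RCLike 𝕜] [DecidableEq n]
    {A : Matrix n n 𝕜} (hA : A.PosSemidef) : hA.sqrt * hA.sqrt = A := by
  unfold Matrix.PosSemidef.sqrt
  conv_rhs => rw [hA.1.spectral_theorem, Unitary.conjStarAlgAut_apply]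
  have hU : (star hA.1.eigenvectorUnitary : Matrix n n 𝕜) * hA.1.eigenvectorUnitary.1 = 1 :=
    Unitary.star_mul_self_of_mem hA.1.eigenvectorUnitary.2
  simp only [mul_assoc]
  congr 1
  rw [← mul_assoc (star _ : Matrix n n 𝕜), hU, one_mul, ← mul_assoc, diagonal_mul_diagonal]
  congr 2
  funext i
  simp only [Function.comp_apply, ← RCLike.ofReal_mul]
  rw [Real.mul_self_sqrt (hA.eigenvalues_nonneg i)]

lemma toEuclideanCLM_nonneg {n : Type*} [Fintype n] [DecidableEq n] {M : Matrix n n ℂ}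
    (hM : M.PosSemidef) : 0 ≤ Matrix.toEuclideanCLM (𝕜 := ℂ) M := by
  rw [ContinuousLinearMap.nonneg_iff_isPositive, ← ContinuousLinearMap.isPositive_toLinearMap_iff]
  exact Matrix.isPositive_toEuclideanLin_iff.mpr hM

theorem stmt1 {n : Type*} [Fintype n] [DecidableEq n] (A A' B B' : Matrix n n ℂ)
    (hA : A.PosSemidef) (hA' : A'.PosSemidef) (hB : B.PosSemidef) (hB' : B'.PosSemidef)
    (hAA' : (A' - A).PosSemidef) (hBB' : (B' - B).PosSemidef) :
    opNorm (hA.sqrt * hB.sqrt) ≤ opNorm (hA'.sqrt * hB'.sqrt) := by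
  set e := Matrix.toEuclideanCLM (𝕜 := ℂ) (n := n) with he
  set a := e hA.sqrt
  set a' := e hA'.sqrt
  set b := e hB.sqrt
  set b' := e hB'.sqrt
  have ha : 0 ≤ a := toEuclideanCLM_nonneg hA.posSemidef_sqrt
  have ha' : 0 ≤ a' := toEuclideanCLM_nonneg hA'.posSemidef_sqrt
  have hb : 0 ≤ b := toEuclideanCLM_nonneg hB.posSemidef_sqrt
  have hb' : 0 ≤ b' := toEuclideanCLM_nonneg hB'.posSemidef_sqrt
  have hsa : star a = a := (IsSelfAdjoint.of_nonneg ha).star_eq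
  have hsa' : star a' = a' := (IsSelfAdjoint.of_nonneg ha').star_eq
  have hsb : star b = b := (IsSelfAdjoint.of_nonneg hb).star_eq
  have hsb' : star b' = b' := (IsSelfAdjoint.of_nonneg hb').star_eq
  have haa : a * a = e A := by rw [← _root_.map_mul, hA.sqrt_mul_self]
  have haa' : a' * a' = e A' := by rw [← _root_.map_mul, hA'.sqrt_mul_self]
  have hbb : b * b = e B := by rw [← _root_.map_mul, hB.sqrt_mul_self]
  have hbb' : b' * b' = e B' := by rw [← _root_.map_mul, hB'.sqrt_mul_self]
  have hAle : e A ≤ e A' := by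
    rw [← sub_nonneg, ← map_sub]
    exact toEuclideanCLM_nonneg hAA'
  have hBle : e B ≤ e B' := by
    rw [← sub_nonneg, ← map_sub]
    exact toEuclideanCLM_nonneg hBB'
  -- squared norm identities
  have sq1 : ∀ x y : EuclideanSpace ℂ n →L[ℂ] EuclideanSpace ℂ n, star x = x → star y = y →
      ‖x * y‖ ^ 2 = ‖y * (x * x) * y‖ := by
    intro x y hx hy
    rw [pow_two, ← CStarRing.norm_star_mul_self (x := x * y), StarMul.star_mul, hx, hy]
    congr 1
  have key : ∀ (x x' y : EuclideanSpace ℂ n →L[ℂ] EuclideanSpace ℂ n),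
      0 ≤ x → 0 ≤ x' → 0 ≤ y → star y = y → x * x ≤ x' * x' → ‖x * y‖ ≤ ‖x' * y‖ := by
    intro x x' y hx hx' hy hsy hle
    have h1 : y * (x * x) * y ≤ y * (x' * x') * y := by
      have h := star_left_conjugate_le_conjugate hle y
      rwa [hsy] at h
    have h0 : (0 : EuclideanSpace ℂ n →L[ℂ] EuclideanSpace ℂ n) ≤ y * (x * x) * y := by
      have hxx : (0 : EuclideanSpace ℂ n →L[ℂ] EuclideanSpace ℂ n) ≤ x * x := by
        have h := star_mul_self_nonneg x
        rwa [(IsSelfAdjoint.of_nonneg hx).star_eq] at h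
      have h := star_left_conjugate_le_conjugate hxx y
      rwa [hsy, mul_zero, zero_mul] at h
    have hn := CStarAlgebra.norm_le_norm_of_nonneg_of_le h0 h1
    have e1 := sq1 x y (IsSelfAdjoint.of_nonneg hx).star_eq hsy
    have e2 := sq1 x' y (IsSelfAdjoint.of_nonneg hx').star_eq hsy
    have hsq : ‖x * y‖ ^ 2 ≤ ‖x' * y‖ ^ 2 := by rw [e1, e2]; exact hn
    exact (pow_le_pow_iff_left₀ (norm_nonneg _) (norm_nonneg _) two_ne_zero).mp hsq
  have step1 : ‖a * b‖ ≤ ‖a' * b‖ := by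
    apply key a a' b ha ha' hb hsb
    rw [haa, haa']; exact hAle
  have step2 : ‖b * a'‖ ≤ ‖b' * a'‖ := by
    apply key b b' a' hb hb' ha' hsa'
    rw [hbb, hbb']; exact hBle
  have nstar : ∀ T : EuclideanSpace ℂ n →L[ℂ] EuclideanSpace ℂ n, ‖star T‖ = ‖T‖ := by
    intro T
    rw [ContinuousLinearMap.star_eq_adjoint]
    exact ContinuousLinearMap.adjoint.norm_map T
  have swap1 : ‖a' * b‖ = ‖b * a'‖ := by
    have h : a' * b = star (b * a') := by rw [StarMul.star_mul, hsa', hsb]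
    rw [h]
    exact nstar _
  have swap2 : ‖b' * a'‖ = ‖a' * b'‖ := by
    have h : a' * b' = star (b' * a') := by rw [StarMul.star_mul, hsa', hsb']
    rw [h]
    exact (nstar _).symm
  have : ‖a * b‖ ≤ ‖a' * b'‖ := by
    calc ‖a * b‖ ≤ ‖a' * b‖ := step1
      _ = ‖b * a'‖ := swap1
      _ ≤ ‖b' * a'‖ := step2
      _ = ‖a' * b'‖ := swap2
  simpa only [opNorm, _root_.map_mul] using this
end

section
/- For every n ≥ 1 there exists a strategy for the n-fold parallel repetition of the BB84 monogamy game whose winning probability equals exactly (1/2 + 1/(2√2))^n; in fact this is achieved with β and γ one-element types, ρ the pure product state with (ρ)_{i,j} = ∏_{k<n} φ_{i_k}·φ_{j_k} where φ = (cos(π/8), sin(π/8)), and the deterministic POVMs P_x^θ = Q_x^θ = identity if x = (0,…,0) and 0 otherwise. -/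
open Matrix ComplexOrder Kronecker

/-- The Hadamard matrix `(1/√2)·[[1,1],[1,−1]]`. -/
noncomputable def Hmat : Matrix (Fin 2) (Fin 2) ℂ :=
  (1 / (Real.sqrt 2 : ℂ)) • !![1, 1; 1, -1]

/-- `M(θ,x) = H^θ · |x⟩⟨x| · H^θ`. -/
noncomputable def bb84M (θ x : Fin 2) : Matrix (Fin 2) (Fin 2) ℂ :=
  Hmat ^ (θ : ℕ) * Matrix.single x x 1 * Hmat ^ (θ : ℕ)

/-- The `n`-qubit BB84 projector `F_x^θ`. -/
noncomputable def bb84F {n : ℕ} (θ x : Fin n → Fin 2) :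
    Matrix (Fin n → Fin 2) (Fin n → Fin 2) ℂ :=
  Matrix.of fun i j => ∏ k, bb84M (θ k) (x k) (i k) (j k)

/-- A POVM on a finite index type. -/
def IsPOVM {ι β : Type*} [Fintype ι] [Fintype β] [DecidableEq β]
    (P : ι → Matrix β β ℂ) : Prop :=
  (∀ x, (P x).PosSemidef) ∧ ∑ x, P x = 1

/-- The qubit state vector `φ = (cos(π/8), sin(π/8))`. -/
noncomputable def phi : Fin 2 → ℂ := ![(Real.cos (Real.pi / 8) : ℂ), (Real.sin (Real.pi / 8) : ℂ)]

/-- The pure product state `ρ` with `ρ_{i,j} = ∏_{k<n} φ_{i_k}·φ_{j_k}` (trivial systems for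
Bob and Charlie). -/
noncomputable def rhoOpt (n : ℕ) :
    Matrix ((Fin n → Fin 2) × Unit × Unit) ((Fin n → Fin 2) × Unit × Unit) ℂ :=
  Matrix.of fun p q => ∏ k, phi (p.1 k) * phi (q.1 k)

/-- The deterministic POVM: identity if `x = (0,…,0)` and `0` otherwise. -/
noncomputable def Popt (n : ℕ) (θ x : Fin n → Fin 2) : Matrix Unit Unit ℂ :=
  if x = 0 then 1 else 0

lemma phi_conj (a : Fin 2) : (starRingEnd ℂ) (phi a) = phi a := by
  fin_cases a <;>
    simp only [phi, Fin.mk_zero, Fin.mk_one, Matrix.cons_val_zero, Matrix.cons_val_one,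
      Matrix.head_cons, Complex.conj_ofReal]

lemma phi_star (a : Fin 2) : star (phi a) = phi a := phi_conj a

lemma phi_norm : ∑ a : Fin 2, phi a * phi a = 1 := by
  have h := Real.sin_sq_add_cos_sq (Real.pi / 8)
  simp only [Fin.sum_univ_two, phi, Matrix.cons_val_zero, Matrix.cons_val_one, Matrix.head_cons]
  have h' := congrArg (Complex.ofReal) h
  push_cast at h' ⊢
  linear_combination h'

lemma inner_eq (θ : Fin 2) :
    ∑ a : Fin 2, ∑ b : Fin 2, bb84M θ 0 a b * (phi b * phi a)
      = ((1 / 2 + 1 / (2 * Real.sqrt 2) : ℝ) : ℂ) := by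
  have h2 : Real.sqrt 2 * Real.sqrt 2 = 2 := Real.mul_self_sqrt (by norm_num)
  have hcos2 : Real.cos (Real.pi / 8) ^ 2 = 1 / 2 + Real.sqrt 2 / 4 := by
    rw [Real.cos_sq, show 2 * (Real.pi / 8) = Real.pi / 4 by ring, Real.cos_pi_div_four]
    ring
  have hsc : 2 * Real.sin (Real.pi / 8) * Real.cos (Real.pi / 8) = Real.sqrt 2 / 2 := by
    rw [← Real.sin_two_mul, show 2 * (Real.pi / 8) = Real.pi / 4 by ring,
      Real.sin_pi_div_four]
  have hne : Real.sqrt 2 ≠ 0 := by positivity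
  have hpyth := Real.sin_sq_add_cos_sq (Real.pi / 8)
  set c := Real.cos (Real.pi / 8) with hcdef
  set s := Real.sin (Real.pi / 8) with hsdef
  clear_value c s
  have hval : ((1/2 + 1/(2*Real.sqrt 2)) : ℝ) = 1/2 + Real.sqrt 2 / 4 := by
    field_simp; nlinarith
  rw [hval]
  fin_cases θ
  · simp only [Fin.isValue, bb84M, phi, Fin.sum_univ_two, Matrix.single,
      pow_zero, Matrix.one_mul, Matrix.mul_one, Matrix.of_apply, Matrix.cons_val_zero,
      Matrix.cons_val_one, Matrix.head_cons]
    rw [← hcdef, ← hsdef]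
    norm_num
    have hr : c * c = 1/2 + Real.sqrt 2/4 := by nlinarith
    have h' := congrArg (Complex.ofReal) hr
    push_cast at h' ⊢
    linear_combination h'
  · simp only [Fin.isValue, bb84M, phi, Hmat, Fin.sum_univ_two, Matrix.single,
      pow_one, Matrix.mul_apply, Matrix.smul_apply, Matrix.of_apply, Matrix.cons_val_zero,
      Matrix.cons_val_one, Matrix.head_cons, Matrix.cons_val', Matrix.head_fin_const,
      Matrix.empty_val', Matrix.cons_val_fin_one, smul_eq_mul, one_div]
    rw [← hcdef, ← hsdef]
    norm_num
    have hr : (Real.sqrt 2)⁻¹ * (Real.sqrt 2)⁻¹ * (c*c) + (Real.sqrt 2)⁻¹ * (Real.sqrt 2)⁻¹ * (s*c)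
        + ((Real.sqrt 2)⁻¹ * (Real.sqrt 2)⁻¹ * (c*s) + (Real.sqrt 2)⁻¹ * (Real.sqrt 2)⁻¹ * (s*s))
        = 1/2 + Real.sqrt 2/4 := by
      have hi : (Real.sqrt 2)⁻¹ * (Real.sqrt 2)⁻¹ = 1/2 := by
        rw [← mul_inv, h2]; norm_num
      rw [hi]; nlinarith
    have h' := congrArg (Complex.ofReal) hr
    push_cast at h' ⊢
    linear_combination h'

lemma rho_fact (n : ℕ) (p q : (Fin n → Fin 2) × Unit × Unit) :
    rhoOpt n p q = (∏ k, phi (p.1 k)) * ∏ k, phi (q.1 k) := by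
  simp [rhoOpt, Finset.prod_mul_distrib]

lemma key_trace {n : ℕ} (θ : Fin n → Fin 2) :
    ((bb84F θ 0 ⊗ₖ (Popt n θ 0 ⊗ₖ Popt n θ 0)) * rhoOpt n).trace
      = ((1 / 2 + 1 / (2 * Real.sqrt 2) : ℝ) : ℂ) ^ n := by
  have hP : Popt n θ 0 = 1 := if_pos rfl
  rw [hP]
  have h1 : ((1 : Matrix Unit Unit ℂ) ⊗ₖ (1 : Matrix Unit Unit ℂ)) = 1 := by
    ext ⟨u, u'⟩ ⟨v, v'⟩; simp [Matrix.one_apply]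
  rw [h1]
  have expand : ((bb84F θ 0 ⊗ₖ (1 : Matrix (Unit × Unit) (Unit × Unit) ℂ)) * rhoOpt n).trace
      = ∑ i : Fin n → Fin 2, ∑ j : Fin n → Fin 2,
          ∏ k, (bb84M (θ k) 0 (i k) (j k) * (phi (j k) * phi (i k))) := by
    simp only [Matrix.trace, Matrix.diag, Matrix.mul_apply, Fintype.sum_prod_type,
      Matrix.kroneckerMap_apply, Matrix.one_apply_eq, mul_one, Finset.univ_unique,
      Finset.sum_singleton, bb84F, rhoOpt, Matrix.of_apply, Pi.zero_apply]
    refine Finset.sum_congr rfl fun i _ => Finset.sum_congr rfl fun j _ => ?_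
    rw [← Finset.prod_mul_distrib]
  rw [expand]
  have step1 : ∀ i : Fin n → Fin 2,
      (∑ j : Fin n → Fin 2, ∏ k, (bb84M (θ k) 0 (i k) (j k) * (phi (j k) * phi (i k))))
        = ∏ k, ∑ b : Fin 2, bb84M (θ k) 0 (i k) b * (phi b * phi (i k)) := by
    intro i
    exact (Fintype.prod_sum fun k b => bb84M (θ k) 0 (i k) b * (phi b * phi (i k))).symm
  simp_rw [step1]
  rw [(Fintype.prod_sum fun k a => ∑ b : Fin 2, bb84M (θ k) 0 a b * (phi b * phi a)).symm]
  rw [Finset.prod_congr rfl fun k _ => inner_eq (θ k)]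
  simp

theorem stmt6 (n : ℕ) (hn : 1 ≤ n) :
    -- `rhoOpt n` is a density matrix
    ((rhoOpt n).PosSemidef ∧ (rhoOpt n).trace = 1) ∧
    -- the deterministic guesses form POVMs (used for both Bob and Charlie)
    (∀ θ : Fin n → Fin 2, IsPOVM (Popt n θ)) ∧
    -- this strategy wins with probability exactly (1/2 + 1/(2√2))^n
    (2 : ℝ)⁻¹ ^ n * ∑ θ : Fin n → Fin 2, ∑ x : Fin n → Fin 2,
        (((bb84F θ x ⊗ₖ (Popt n θ x ⊗ₖ Popt n θ x)) * rhoOpt n).trace).re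
      = (1 / 2 + 1 / (2 * Real.sqrt 2)) ^ n := by
  set v : ((Fin n → Fin 2) × Unit × Unit) → ℂ := fun p => ∏ k, phi (p.1 k) with hv
  have hvconj : ∀ p, star (v p) = v p := by
    intro p
    rw [hv]
    rw [star_prod]
    exact Finset.prod_congr rfl fun k _ => phi_star _
  refine ⟨⟨Matrix.posSemidef_iff_dotProduct_mulVec.mpr ⟨?_, ?_⟩, ?_⟩, ?_, ?_⟩
  · -- Hermitian
    ext p q
    calc (rhoOpt n)ᴴ p q = star (v q * v p) := by
          rw [Matrix.conjTranspose_apply, rho_fact]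
      _ = v p * v q := by rw [star_mul', hvconj, hvconj, mul_comm]
      _ = rhoOpt n p q := (rho_fact n p q).symm
  · -- nonneg quadratic form
    intro x
    have : dotProduct (star x) ((rhoOpt n) *ᵥ x)
        = star (∑ q, v q * x q) * (∑ q, v q * x q) := by
      simp only [dotProduct, Matrix.mulVec, rho_fact, star_sum, star_mul', hvconj,
        Pi.star_apply, Finset.mul_sum, Finset.sum_mul]
      rw [Finset.sum_comm]
      refine Finset.sum_congr rfl fun p _ => Finset.sum_congr rfl fun q _ => ?_
      simp only [hv]
      ring
    rw [this]
    exact star_mul_self_nonneg _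
  · -- trace 1
    simp only [Matrix.trace, Matrix.diag, rhoOpt, Matrix.of_apply, Fintype.sum_prod_type,
      Finset.univ_unique, Finset.sum_singleton]
    rw [← Fintype.prod_sum fun (k : Fin n) (a : Fin 2) => phi a * phi a]
    have h := phi_norm
    rw [Fin.sum_univ_two] at h
    simp only [Fin.sum_univ_two, h, Finset.prod_const_one]
  · -- POVM
    intro θ
    constructor
    · intro x
      unfold Popt
      split
      · exact Matrix.PosSemidef.one
      · exact Matrix.PosSemidef.zero
    · simp [Popt]
  · -- winning probability
    have hx0 : ∀ θ x : Fin n → Fin 2, x ≠ 0 →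
        (((bb84F θ x ⊗ₖ (Popt n θ x ⊗ₖ Popt n θ x)) * rhoOpt n).trace).re = 0 := by
      intro θ x hx
      rw [show Popt n θ x = 0 from if_neg hx]
      simp
    have hsum : ∀ θ : Fin n → Fin 2,
        ∑ x : Fin n → Fin 2,
          (((bb84F θ x ⊗ₖ (Popt n θ x ⊗ₖ Popt n θ x)) * rhoOpt n).trace).re
        = (1 / 2 + 1 / (2 * Real.sqrt 2)) ^ n := by
      intro θ
      rw [Finset.sum_eq_single 0]
      · rw [key_trace θ, ← Complex.ofReal_pow, Complex.ofReal_re]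
      · intro x _ hx; exact hx0 θ x hx
      · intro h; exact absurd (Finset.mem_univ _) h
    simp_rw [hsum]
    rw [Finset.sum_const, Finset.card_univ]
    have hcard : Fintype.card (Fin n → Fin 2) = 2 ^ n := by simp
    rw [hcard]
    rw [nsmul_eq_mul]
    push_cast
    rw [← mul_assoc, ← mul_pow]
    norm_num
end

section
/- Let n ≥ 1, let β, γ be finite index types, let {P_x^θ}_{x∈{0,1}^n} be a projective POVM on β and {Q_x^θ}_{x∈{0,1}^n} a projective POVM on γ for each θ ∈ {0,1}^n, and set Π^θ = ∑_{x∈{0,1}^n} F_x^θ ⊗ P_x^θ ⊗ Q_x^θ. Then for any θ, θ' ∈ {0,1}^n at Hamming distance t, ‖Π^θ · Π^{θ'}‖ ≤ (1/√2)^t. -/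
open Matrix ComplexOrder Kronecker

/-- A projective POVM: a family of projections (`P² = P = Pᴴ`) summing to the identity. -/
def IsProjPOVM {ι β : Type*} [Fintype ι] [Fintype β] [DecidableEq β]
    (P : ι → Matrix β β ℂ) : Prop :=
  (∀ x, (P x)ᴴ = P x ∧ P x * P x = P x) ∧ ∑ x, P x = 1

namespace BB84

noncomputable def e (x : Fin 2) : Matrix (Fin 2) (Fin 2) ℂ := Matrix.single x x 1

lemma sqrt2_sq : (Real.sqrt 2 : ℂ) * (Real.sqrt 2 : ℂ) = 2 := by
  norm_cast
  exact Real.mul_self_sqrt (by norm_num)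

lemma Hmat_mul_self : Hmat * Hmat = 1 := by
  rw [Hmat, smul_mul_smul_comm]
  have h2 : (Real.sqrt 2 : ℂ) ≠ 0 := by
    intro h
    have := sqrt2_sq
    rw [h] at this
    norm_num at this
  have : (!![1, 1; 1, -1] * !![1, 1; 1, -1] : Matrix (Fin 2) (Fin 2) ℂ) = (2 : ℂ) • 1 := by
    norm_num [Matrix.mul_fin_two]
    ext i j
    fin_cases i <;> fin_cases j <;> simp
  rw [this, smul_smul]
  rw [show (1 / (Real.sqrt 2 : ℂ)) * (1 / (Real.sqrt 2 : ℂ)) * 2 = 1 by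
    field_simp
    rw [pow_two]
    exact sqrt2_sq.symm]
  rw [one_smul]

lemma Hmat_herm : Hmatᴴ = Hmat := by
  rw [Hmat]
  ext i j
  fin_cases i <;> fin_cases j <;> simp [Matrix.conjTranspose_apply] <;> norm_num

lemma e_herm (x : Fin 2) : (e x)ᴴ = e x := by
  ext i j
  fin_cases x <;> fin_cases i <;> fin_cases j <;>
    simp [e, Matrix.single, Matrix.conjTranspose_apply]

lemma e_mul_e (x y : Fin 2) : e x * e y = if x = y then e x else 0 := by
  fin_cases x <;> fin_cases y <;>
    · ext i j
      fin_cases i <;> fin_cases j <;>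
        simp [e, Matrix.single, Matrix.mul_apply, Fin.sum_univ_two]

lemma e_conj (x : Fin 2) (A : Matrix (Fin 2) (Fin 2) ℂ) :
    e x * A * e x = A x x • e x := by
  fin_cases x <;>
    · ext i j
      fin_cases i <;> fin_cases j <;>
        simp [e, Matrix.single, Matrix.mul_apply, Fin.sum_univ_two]

lemma HeH_diag (x y : Fin 2) : (Hmat * e y * Hmat) x x = 1 / 2 := by
  have hs := sqrt2_sq
  fin_cases x <;> fin_cases y <;>
    · simp [Hmat, e, Matrix.single, Matrix.mul_apply, Fin.sum_univ_two,
        Matrix.vecHead, Matrix.vecTail, Function.comp]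
      field_simp
      simp only [pow_two, sqrt2_sq]
      try norm_num

end BB84

namespace BB84
lemma fin2_cases (a : Fin 2) : a = 0 ∨ a = 1 := by omega

lemma bb84M_eq (a x : Fin 2) : bb84M a x = Hmat ^ (a : ℕ) * e x * Hmat ^ (a : ℕ) := rfl

lemma bb84M_zero (x : Fin 2) : bb84M 0 x = e x := by
  simp [bb84M_eq]

lemma bb84M_one (x : Fin 2) : bb84M 1 x = Hmat * e x * Hmat := by
  simp [bb84M_eq]

lemma bb84M_herm (a x : Fin 2) : (bb84M a x)ᴴ = bb84M a x := by
  rcases fin2_cases a with rfl | rfl <;>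
    simp [bb84M_zero, bb84M_one, Matrix.conjTranspose_mul, e_herm, Hmat_herm, mul_assoc]

lemma bb84M_mul_same (a : Fin 2) (x y : Fin 2) :
    bb84M a x * bb84M a y = if x = y then bb84M a x else 0 := by
  rcases fin2_cases a with rfl | rfl
  · simp only [bb84M_zero]
    exact e_mul_e x y
  · simp only [bb84M_one]
    have : Hmat * e x * Hmat * (Hmat * e y * Hmat) = Hmat * (e x * e y) * Hmat := by
      rw [show Hmat * e x * Hmat * (Hmat * e y * Hmat)
          = Hmat * e x * (Hmat * Hmat) * e y * Hmat by noncomm_ring]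
      rw [Hmat_mul_self]
      noncomm_ring
    rw [this, e_mul_e]
    split <;> simp

noncomputable def tval (a b x y : Fin 2) : ℝ :=
  if a = b then (if x = y then 1 else 0) else 1 / 2

lemma tval_nonneg (a b x y : Fin 2) : 0 ≤ tval a b x y := by
  unfold tval
  split
  · split <;> norm_num
  · norm_num

lemma tval_le_one (a b x y : Fin 2) : tval a b x y ≤ 1 := by
  unfold tval
  split
  · split <;> norm_num
  · norm_num

lemma tval_of_ne {a b : Fin 2} (h : a ≠ b) (x y : Fin 2) : tval a b x y = 1 / 2 := by
  simp [tval, h]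

lemma bb84M_triple (a b x y : Fin 2) :
    bb84M a x * bb84M b y * bb84M a x = ((tval a b x y : ℝ) : ℂ) • bb84M a x := by
  by_cases hab : a = b
  · subst hab
    rw [bb84M_mul_same]
    by_cases hxy : x = y
    · subst hxy
      rw [if_pos rfl, bb84M_mul_same, if_pos rfl]
      simp [tval]
    · rw [if_neg hxy, zero_mul]
      simp [tval, hxy]
  · rw [tval_of_ne hab]
    have key : ∀ u v : Fin 2, bb84M 0 u * bb84M 1 v * bb84M 0 u
        = ((1 / 2 : ℝ) : ℂ) • bb84M 0 u := by
      intro u v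
      rw [bb84M_zero, bb84M_one, e_conj, HeH_diag]
      norm_num
    have key' : ∀ u v : Fin 2, bb84M 1 u * bb84M 0 v * bb84M 1 u
        = ((1 / 2 : ℝ) : ℂ) • bb84M 1 u := by
      intro u v
      rw [bb84M_zero, bb84M_one]
      have : Hmat * e u * Hmat * e v * (Hmat * e u * Hmat)
          = Hmat * (e u * (Hmat * e v * Hmat) * e u) * Hmat := by noncomm_ring
      rw [this, e_conj, HeH_diag]
      norm_num [Matrix.mul_smul, Matrix.smul_mul]
    rcases fin2_cases a with rfl | rfl <;> rcases fin2_cases b with rfl | rfl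
    · exact absurd rfl hab
    · exact key x y
    · exact key' x y
    · exact absurd rfl hab

end BB84

namespace BB84

variable {n : ℕ}

noncomputable def tens (A : Fin n → Matrix (Fin 2) (Fin 2) ℂ) :
    Matrix (Fin n → Fin 2) (Fin n → Fin 2) ℂ :=
  Matrix.of fun i j => ∏ k, A k (i k) (j k)

lemma tens_mul (A B : Fin n → Matrix (Fin 2) (Fin 2) ℂ) :
    tens A * tens B = tens fun k => A k * B k := by
  ext i j
  show ∑ m : Fin n → Fin 2, (∏ k, A k (i k) (m k)) * ∏ k, B k (m k) (j k)
      = ∏ k, (A k * B k) (i k) (j k)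
  have : ∀ k, (A k * B k) (i k) (j k) = ∑ m : Fin 2, A k (i k) m * B k m (j k) := by
    intro k; rfl
  simp_rw [this]
  rw [Fintype.prod_sum]
  exact Finset.sum_congr rfl fun m _ => (Finset.prod_mul_distrib).symm

lemma tens_conjTranspose (A : Fin n → Matrix (Fin 2) (Fin 2) ℂ) :
    (tens A)ᴴ = tens fun k => (A k)ᴴ := by
  ext i j
  show (starRingEnd ℂ) (∏ k, A k (j k) (i k)) = ∏ k, (starRingEnd ℂ) (A k (j k) (i k))
  exact map_prod _ _ _

lemma tens_smul (c : Fin n → ℂ) (A : Fin n → Matrix (Fin 2) (Fin 2) ℂ) :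
    (tens fun k => c k • A k) = (∏ k, c k) • tens A := by
  ext i j
  show ∏ k, (c k • A k) (i k) (j k) = (∏ k, c k) * ∏ k, A k (i k) (j k)
  simp only [Matrix.smul_apply, smul_eq_mul]
  exact Finset.prod_mul_distrib

lemma tens_eq_zero {A : Fin n → Matrix (Fin 2) (Fin 2) ℂ} (k0 : Fin n) (h : A k0 = 0) :
    tens A = 0 := by
  ext i j
  show (∏ k, A k (i k) (j k)) = 0
  exact Finset.prod_eq_zero (Finset.mem_univ k0) (by rw [h]; rfl)

lemma bb84F_eq_tens (θ x : Fin n → Fin 2) :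
    bb84F θ x = tens fun k => bb84M (θ k) (x k) := rfl

lemma bb84F_herm (θ x : Fin n → Fin 2) : (bb84F θ x)ᴴ = bb84F θ x := by
  rw [bb84F_eq_tens, tens_conjTranspose]
  simp_rw [bb84M_herm]

lemma bb84F_mul_same (θ x y : Fin n → Fin 2) :
    bb84F θ x * bb84F θ y = if x = y then bb84F θ x else 0 := by
  rw [bb84F_eq_tens, bb84F_eq_tens, tens_mul]
  by_cases hxy : x = y
  · subst hxy
    rw [if_pos rfl]
    have : (fun k => bb84M (θ k) (x k) * bb84M (θ k) (x k))
        = fun k => bb84M (θ k) (x k) := by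
      funext k
      rw [bb84M_mul_same, if_pos rfl]
    rw [this]
  · rw [if_neg hxy]
    obtain ⟨k0, hk0⟩ := Function.ne_iff.mp hxy
    exact tens_eq_zero k0 (by rw [bb84M_mul_same, if_neg hk0])

lemma bb84F_triple (θ θ' x y : Fin n → Fin 2) :
    bb84F θ x * bb84F θ' y * bb84F θ x
      = ((∏ k, tval (θ k) (θ' k) (x k) (y k) : ℝ) : ℂ) • bb84F θ x := by
  rw [bb84F_eq_tens, bb84F_eq_tens, tens_mul, tens_mul]
  have : (fun k => bb84M (θ k) (x k) * bb84M (θ' k) (y k) * bb84M (θ k) (x k))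
      = fun k => ((tval (θ k) (θ' k) (x k) (y k) : ℝ) : ℂ) • bb84M (θ k) (x k) := by
    ext1 k
    exact bb84M_triple _ _ _ _
  rw [this, tens_smul, Complex.ofReal_prod]

lemma psd_of_proj {ι : Type*} [Fintype ι] [DecidableEq ι] {M : Matrix ι ι ℂ}
    (h1 : Mᴴ = M) (h2 : M * M = M) : M.PosSemidef := by
  have : M = Mᴴ * M := by rw [h1, h2]
  rw [this]
  exact Matrix.posSemidef_conjTranspose_mul_self M

lemma bb84F_posSemidef (θ x : Fin n → Fin 2) : (bb84F θ x).PosSemidef :=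
  psd_of_proj (bb84F_herm θ x) (by rw [bb84F_mul_same, if_pos rfl])

end BB84

namespace BB84

open scoped Matrix.Norms.L2Operator

variable {ι κ : Type*} [Fintype ι] [DecidableEq ι] [Fintype κ] [DecidableEq κ]

lemma kron_conjTranspose (A : Matrix ι ι ℂ) (B : Matrix κ κ ℂ) :
    (A ⊗ₖ B)ᴴ = Aᴴ ⊗ₖ Bᴴ := by
  ext ⟨i, j⟩ ⟨k, l⟩
  simp [Matrix.conjTranspose_apply]

lemma kron_posSemidef {A : Matrix ι ι ℂ} {B : Matrix κ κ ℂ}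
    (hA : A.PosSemidef) (hB : B.PosSemidef) : (A ⊗ₖ B).PosSemidef := by
  exact hA.kronecker hB

lemma kron_sum_right {σ : Type*} (s : Finset σ) (A : Matrix ι ι ℂ) (f : σ → Matrix κ κ ℂ) :
    A ⊗ₖ (∑ y ∈ s, f y) = ∑ y ∈ s, A ⊗ₖ f y := by
  ext ⟨i, j⟩ ⟨k, l⟩
  simp [Matrix.sum_apply, Finset.mul_sum]

lemma sum_kron_left {σ : Type*} (s : Finset σ) (f : σ → Matrix ι ι ℂ) (B : Matrix κ κ ℂ) :
    (∑ x ∈ s, f x) ⊗ₖ B = ∑ x ∈ s, f x ⊗ₖ B := by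
  ext ⟨i, j⟩ ⟨k, l⟩
  simp [Matrix.sum_apply, Finset.sum_mul]

lemma psd_real_smul {A : Matrix ι ι ℂ} (hA : A.PosSemidef) {r : ℝ} (hr : 0 ≤ r) :
    ((r : ℂ) • A).PosSemidef := by
  constructor
  · show ((r : ℂ) • A)ᴴ = (r : ℂ) • A
    rw [Matrix.conjTranspose_smul, hA.1]
    congr 1
    simp
  · have h0 : (0 : ℂ) ≤ (r : ℂ) := by
      rw [Complex.le_def]
      simp [hr]
    exact (hA.smul h0).2

/-- Sum of PSD matrices equal to zero forces each term to be zero. -/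
lemma sum_psd_eq_zero {σ : Type*} {s : Finset σ} {f : σ → Matrix ι ι ℂ}
    (hf : ∀ w ∈ s, (f w).PosSemidef) (hsum : ∑ w ∈ s, f w = 0) {z : σ} (hz : z ∈ s) :
    f z = 0 := by
  have hquad : ∀ v : ι → ℂ, dotProduct (star v) ((f z) *ᵥ v) = 0 := by
    intro v
    have h0 : ∑ w ∈ s, dotProduct (star v) ((f w) *ᵥ v) = 0 := by
      have hlin : ∀ t : Finset σ, (∑ w ∈ t, dotProduct (star v) ((f w) *ᵥ v))
          = dotProduct (star v) ((∑ w ∈ t, f w) *ᵥ v) := by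
        intro t
        induction t using Finset.cons_induction with
        | empty => simp
        | cons a t ha ih =>
          simp only [Finset.sum_cons, Matrix.add_mulVec, dotProduct_add, ih]
      rw [hlin, hsum, Matrix.zero_mulVec, dotProduct_zero]
    exact (Finset.sum_eq_zero_iff_of_nonneg fun w hw => (hf w hw).dotProduct_mulVec_nonneg v).mp h0 z hz
  have hmv : ∀ v : ι → ℂ, (f z) *ᵥ v = 0 := by
    intro v
    exact ((hf z hz).dotProduct_mulVec_zero_iff v).mp (hquad v)
  ext i j
  have := congrFun (hmv (Pi.single j 1)) i
  rwa [Matrix.mulVec_single_one] at this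

lemma psd_sum {σ : Type*} (s : Finset σ) (f : σ → Matrix ι ι ℂ)
    (h : ∀ w ∈ s, (f w).PosSemidef) : (∑ w ∈ s, f w).PosSemidef :=
  Finset.sum_induction f _ (fun _ _ ha hb => ha.add hb) Matrix.PosSemidef.zero h

lemma povm_orth {β : Type*} [Fintype β] [DecidableEq β]
    {σ : Type*} [Fintype σ] [DecidableEq σ]
    {P : σ → Matrix β β ℂ} (hP : IsProjPOVM P) {x z : σ} (hxz : x ≠ z) :
    P x * P z = 0 := by
  have herm : ∀ w, (P w)ᴴ = P w := fun w => (hP.1 w).1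
  have idem : ∀ w, P w * P w = P w := fun w => (hP.1 w).2
  have hpsd : ∀ w, (P x * P w * P x).PosSemidef := by
    intro w
    have : P x * P w * P x = (P w * P x)ᴴ * (P w * P x) := by
      rw [Matrix.conjTranspose_mul, herm, herm]
      rw [show P x * P w * (P w * P x) = P x * (P w * P w) * P x by noncomm_ring, idem]
    rw [this]
    exact Matrix.posSemidef_conjTranspose_mul_self _
  have hsum : ∑ w, P x * P w * P x = P x := by
    simp_rw [← Finset.sum_mul, ← Finset.mul_sum, hP.2, mul_one, idem]
  have hrest : ∑ w ∈ Finset.univ.erase x, P x * P w * P x = 0 := by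
    have := Finset.add_sum_erase Finset.univ (fun w => P x * P w * P x) (Finset.mem_univ x)
    rw [hsum] at this
    have hx : P x * P x * P x = P x := by rw [idem, idem]
    simp only [hx] at this
    exact (add_eq_left).mp this
  have hz : P x * P z * P x = 0 :=
    sum_psd_eq_zero (fun w _ => hpsd w) hrest (Finset.mem_erase.mpr ⟨hxz.symm, Finset.mem_univ z⟩)
  have : (P z * P x)ᴴ * (P z * P x) = 0 := by
    rw [Matrix.conjTranspose_mul, herm, herm]
    rw [show P x * P z * (P z * P x) = P x * (P z * P z) * P x by noncomm_ring, idem]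
    exact hz
  have h0 : P z * P x = 0 := Matrix.conjTranspose_mul_self_eq_zero.mp this
  calc P x * P z = ((P z)ᴴ * (P x)ᴴ)ᴴ := by rw [Matrix.conjTranspose_mul]; simp [herm]
  _ = 0 := by rw [herm, herm, h0, Matrix.conjTranspose_zero]

end BB84

namespace BB84

set_option synthInstance.maxHeartbeats 1000000

open scoped Matrix.Norms.L2Operator

variable {ι : Type*} [Fintype ι] [DecidableEq ι]

lemma opNorm_eq (M : Matrix ι ι ℂ) : opNorm M = ‖M‖ := rfl

lemma norm_proj_le_one {M : Matrix ι ι ℂ} (h1 : Mᴴ = M) (h2 : M * M = M) : ‖M‖ ≤ 1 := by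
  have hcs : ‖Mᴴ * M‖ = ‖M‖ * ‖M‖ := Matrix.l2_opNorm_conjTranspose_mul_self M
  rw [h1, h2] at hcs
  nlinarith [norm_nonneg (E := Matrix ι ι ℂ) M]

lemma clm_nonneg_of_psd {T : Matrix ι ι ℂ} (hT : T.PosSemidef) :
    (0 : EuclideanSpace ℂ ι →L[ℂ] EuclideanSpace ℂ ι) ≤ Matrix.toEuclideanCLM (𝕜 := ℂ) T := by
  open scoped MatrixOrder in
  obtain ⟨B, rfl⟩ := CStarAlgebra.nonneg_iff_eq_star_mul_self.mp hT.nonneg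
  rw [_root_.map_mul, map_star]
  exact star_mul_self_nonneg _

lemma psd_norm_le {S : Matrix ι ι ℂ} {c : ℝ} (hc : 0 ≤ c) (hS : S.PosSemidef)
    (h : (((c : ℂ) • (1 : Matrix ι ι ℂ)) - S).PosSemidef) : ‖S‖ ≤ c := by
  have hnorm : ‖S‖ = ‖Matrix.toEuclideanCLM (𝕜 := ℂ) S‖ := rfl
  rw [hnorm]
  rw [CStarAlgebra.norm_le_iff_le_algebraMap (Matrix.toEuclideanCLM (𝕜 := ℂ) S) hc
    (clm_nonneg_of_psd hS)]
  have halg : algebraMap ℝ (EuclideanSpace ℂ ι →L[ℂ] EuclideanSpace ℂ ι) c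
      = Matrix.toEuclideanCLM (𝕜 := ℂ) ((c : ℂ) • (1 : Matrix ι ι ℂ)) := by
    rw [_root_.map_smul, _root_.map_one, Algebra.algebraMap_eq_smul_one]
    exact (Complex.coe_smul c (1 : EuclideanSpace ℂ ι →L[ℂ] EuclideanSpace ℂ ι)).symm
  rw [halg, ← sub_nonneg, ← map_sub]
  exact clm_nonneg_of_psd h

end BB84

set_option maxHeartbeats 1000000
set_option synthInstance.maxHeartbeats 1000000

open BB84
open scoped Matrix.Norms.L2Operator

theorem stmt7 (n : ℕ) (hn : 1 ≤ n)
    {β γ : Type*} [Fintype β] [DecidableEq β] [Fintype γ] [DecidableEq γ]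
    (P : (Fin n → Fin 2) → (Fin n → Fin 2) → Matrix β β ℂ) (hP : ∀ θ, IsProjPOVM (P θ))
    (Q : (Fin n → Fin 2) → (Fin n → Fin 2) → Matrix γ γ ℂ) (hQ : ∀ θ, IsProjPOVM (Q θ))
    (PiOp : (Fin n → Fin 2) → Matrix ((Fin n → Fin 2) × β × γ) ((Fin n → Fin 2) × β × γ) ℂ)
    (hPiOp : ∀ θ, PiOp θ = ∑ x : Fin n → Fin 2, bb84F θ x ⊗ₖ (P θ x ⊗ₖ Q θ x))
    (θ θ' : Fin n → Fin 2) :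
    opNorm (PiOp θ * PiOp θ') ≤ (1 / Real.sqrt 2) ^ hammingDist θ θ' := by
  classical
  set t := hammingDist θ θ' with ht
  set c : ℝ := (1 / 2 : ℝ) ^ t with hc
  have hc0 : (0 : ℝ) ≤ c := by positivity
  set r : (Fin n → Fin 2) → (Fin n → Fin 2) → ℝ :=
    fun x y => ∏ k, tval (θ k) (θ' k) (x k) (y k) with hrdef
  -- collapse lemma for products with the same basis θ₀
  have collapse : ∀ (θ₀ : Fin n → Fin 2) (f g : (Fin n → Fin 2) → Matrix (β × γ) (β × γ) ℂ),
      (∑ x, bb84F θ₀ x ⊗ₖ f x) * (∑ y, bb84F θ₀ y ⊗ₖ g y)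
        = ∑ x, bb84F θ₀ x ⊗ₖ (f x * g x) := by
    intro θ₀ f g
    rw [Finset.sum_mul_sum]
    refine Finset.sum_congr rfl fun x _ => ?_
    rw [Finset.sum_eq_single x]
    · rw [← Matrix.mul_kronecker_mul, bb84F_mul_same, if_pos rfl]
    · intro y _ hyx
      rw [← Matrix.mul_kronecker_mul, bb84F_mul_same, if_neg (fun h => hyx h.symm),
        Matrix.zero_kronecker]
    · intro hx
      exact absurd (Finset.mem_univ x) hx
  set A : Matrix ((Fin n → Fin 2) × β × γ) ((Fin n → Fin 2) × β × γ) ℂ :=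
    ∑ x, bb84F θ x ⊗ₖ (P θ x ⊗ₖ (1 : Matrix γ γ ℂ)) with hAdef
  set B : Matrix ((Fin n → Fin 2) × β × γ) ((Fin n → Fin 2) × β × γ) ℂ :=
    ∑ y, bb84F θ' y ⊗ₖ ((1 : Matrix β β ℂ) ⊗ₖ Q θ' y) with hBdef
  have hPherm : ∀ θ₀ x, (P θ₀ x)ᴴ = P θ₀ x := fun θ₀ x => ((hP θ₀).1 x).1
  have hPidem : ∀ θ₀ x, P θ₀ x * P θ₀ x = P θ₀ x := fun θ₀ x => ((hP θ₀).1 x).2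
  have hQherm : ∀ θ₀ x, (Q θ₀ x)ᴴ = Q θ₀ x := fun θ₀ x => ((hQ θ₀).1 x).1
  have hQidem : ∀ θ₀ x, Q θ₀ x * Q θ₀ x = Q θ₀ x := fun θ₀ x => ((hQ θ₀).1 x).2
  -- Π A = Π, B Π' = Π'
  have hPiA : PiOp θ * A = PiOp θ := by
    rw [hPiOp θ, hAdef, collapse]
    refine Finset.sum_congr rfl fun x _ => ?_
    rw [← Matrix.mul_kronecker_mul, hPidem, mul_one]
  have hBPi : B * PiOp θ' = PiOp θ' := by
    rw [hPiOp θ', hBdef, collapse]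
    refine Finset.sum_congr rfl fun x _ => ?_
    rw [← Matrix.mul_kronecker_mul, hQidem, one_mul]
  -- projections
  have hPiProj : ∀ θ₀, PiOp θ₀ * PiOp θ₀ = PiOp θ₀ := by
    intro θ₀
    rw [hPiOp θ₀, collapse]
    refine Finset.sum_congr rfl fun x _ => ?_
    rw [← Matrix.mul_kronecker_mul, hPidem, hQidem]
  have hPiHerm : ∀ θ₀, (PiOp θ₀)ᴴ = PiOp θ₀ := by
    intro θ₀
    rw [hPiOp θ₀, Matrix.conjTranspose_sum]
    refine Finset.sum_congr rfl fun x _ => ?_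
    rw [kron_conjTranspose, kron_conjTranspose, bb84F_herm, hPherm, hQherm]
  have hAproj : A * A = A := by
    rw [hAdef, collapse]
    refine Finset.sum_congr rfl fun x _ => ?_
    rw [← Matrix.mul_kronecker_mul, hPidem, one_mul]
  have hAherm : Aᴴ = A := by
    rw [hAdef, Matrix.conjTranspose_sum]
    refine Finset.sum_congr rfl fun x _ => ?_
    rw [kron_conjTranspose, kron_conjTranspose, bb84F_herm, hPherm, Matrix.conjTranspose_one]
  have hBproj : B * B = B := by
    rw [hBdef, collapse]
    refine Finset.sum_congr rfl fun x _ => ?_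
    rw [← Matrix.mul_kronecker_mul, hQidem, one_mul]
  have hBherm : Bᴴ = B := by
    rw [hBdef, Matrix.conjTranspose_sum]
    refine Finset.sum_congr rfl fun x _ => ?_
    rw [kron_conjTranspose, kron_conjTranspose, bb84F_herm, hQherm, Matrix.conjTranspose_one]
  -- A * B expansion
  have hAB : A * B = ∑ x, ∑ y, (bb84F θ x * bb84F θ' y) ⊗ₖ (P θ x ⊗ₖ Q θ' y) := by
    rw [hAdef, hBdef, Finset.sum_mul_sum]
    refine Finset.sum_congr rfl fun x _ => Finset.sum_congr rfl fun y _ => ?_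
    rw [← Matrix.mul_kronecker_mul, ← Matrix.mul_kronecker_mul, mul_one, one_mul]
  -- S = A B A
  have hS : A * B * A = ∑ x, ∑ y, ((r x y : ℝ) : ℂ) • (bb84F θ x ⊗ₖ (P θ x ⊗ₖ Q θ' y)) := by
    rw [hAB, Finset.sum_mul]
    refine Finset.sum_congr rfl fun x _ => ?_
    rw [Finset.sum_mul]
    refine Finset.sum_congr rfl fun y _ => ?_
    rw [hAdef, Finset.mul_sum, Finset.sum_eq_single x]
    · rw [← Matrix.mul_kronecker_mul, ← Matrix.mul_kronecker_mul, bb84F_triple, hPidem,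
        mul_one, Matrix.smul_kronecker]
    · intro z _ hzx
      rw [← Matrix.mul_kronecker_mul, ← Matrix.mul_kronecker_mul,
        povm_orth (hP θ) (fun h => hzx h.symm), Matrix.zero_kronecker, Matrix.kronecker_zero]
    · intro hx
      exact absurd (Finset.mem_univ x) hx
  -- bounds on r
  have hr0 : ∀ x y, 0 ≤ r x y := fun x y =>
    Finset.prod_nonneg fun k _ => tval_nonneg _ _ _ _
  have hrc : ∀ x y, r x y ≤ c := by
    intro x y
    have step : r x y ≤ ∏ k, (if θ k = θ' k then (1 : ℝ) else 1 / 2) := by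
      refine Finset.prod_le_prod (fun k _ => tval_nonneg _ _ _ _) (fun k _ => ?_)
      by_cases h : θ k = θ' k
      · rw [if_pos h]
        exact tval_le_one _ _ _ _
      · rw [if_neg h, tval_of_ne h]
    refine step.trans ?_
    rw [Finset.prod_ite, Finset.prod_const, Finset.prod_const, one_pow, one_mul]
    rw [hc, ht]
    apply le_of_eq
    congr 1
  -- PSD facts
  have hPpsd : ∀ x, (P θ x).PosSemidef := fun x => psd_of_proj (hPherm θ x) (hPidem θ x)
  have hQpsd : ∀ y, (Q θ' y).PosSemidef := fun y => psd_of_proj (hQherm θ' y) (hQidem θ' y)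
  have hterm_psd : ∀ x y, (bb84F θ x ⊗ₖ (P θ x ⊗ₖ Q θ' y)).PosSemidef := fun x y =>
    kron_posSemidef (bb84F_posSemidef θ x) (kron_posSemidef (hPpsd x) (hQpsd y))
  have hSpsd : (A * B * A).PosSemidef := by
    rw [hS]
    refine psd_sum _ _ fun x _ => psd_sum _ _ fun y _ => ?_
    exact psd_real_smul (hterm_psd x y) (hr0 x y)
  -- c•1 - S is PSD
  have h1A : ((1 : Matrix ((Fin n → Fin 2) × β × γ) ((Fin n → Fin 2) × β × γ) ℂ) - A).PosSemidef := by
    refine psd_of_proj ?_ ?_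
    · rw [Matrix.conjTranspose_sub, Matrix.conjTranspose_one, hAherm]
    · rw [sub_mul, one_mul, mul_sub, mul_one, hAproj]
      abel
  have hcA : (c : ℂ) • A = ∑ x, ∑ y, (c : ℂ) • (bb84F θ x ⊗ₖ (P θ x ⊗ₖ Q θ' y)) := by
    rw [hAdef, Finset.smul_sum]
    refine Finset.sum_congr rfl fun x _ => ?_
    rw [show (1 : Matrix γ γ ℂ) = ∑ y, Q θ' y from (hQ θ').2.symm, kron_sum_right,
      kron_sum_right, Finset.smul_sum]
  have hkey : (((c : ℝ) : ℂ) • (1 : Matrix ((Fin n → Fin 2) × β × γ) ((Fin n → Fin 2) × β × γ) ℂ)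
      - A * B * A).PosSemidef := by
    have hdecomp : ((c : ℝ) : ℂ) • (1 : Matrix ((Fin n → Fin 2) × β × γ) ((Fin n → Fin 2) × β × γ) ℂ)
        - A * B * A
        = (c : ℂ) • ((1 : Matrix ((Fin n → Fin 2) × β × γ) ((Fin n → Fin 2) × β × γ) ℂ) - A)
          + ∑ x, ∑ y, (((c - r x y : ℝ)) : ℂ) • (bb84F θ x ⊗ₖ (P θ x ⊗ₖ Q θ' y)) := by
      have hsplit : ∀ x y, (((c - r x y : ℝ)) : ℂ) • (bb84F θ x ⊗ₖ (P θ x ⊗ₖ Q θ' y))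
          = (c : ℂ) • (bb84F θ x ⊗ₖ (P θ x ⊗ₖ Q θ' y))
            - ((r x y : ℝ) : ℂ) • (bb84F θ x ⊗ₖ (P θ x ⊗ₖ Q θ' y)) := by
        intro x y
        rw [Complex.ofReal_sub, sub_smul]
      simp_rw [hsplit]
      simp only [Finset.sum_sub_distrib]
      rw [← hcA, ← hS, smul_sub]
      abel
    rw [hdecomp]
    refine Matrix.PosSemidef.add (psd_real_smul h1A hc0) ?_
    refine psd_sum _ _ fun x _ => psd_sum _ _ fun y _ => ?_
    exact psd_real_smul (hterm_psd x y) (by linarith [hrc x y])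
  -- norm bounds
  have hSnorm : ‖A * B * A‖ ≤ c := psd_norm_le hc0 hSpsd hkey
  have hABA : (A * B) * (A * B)ᴴ = A * B * A := by
    rw [Matrix.conjTranspose_mul, hAherm, hBherm]
    calc A * B * (B * A) = A * (B * B) * A := by noncomm_ring
    _ = A * B * A := by rw [hBproj]
  have hABnorm : ‖A * B‖ * ‖A * B‖ ≤ c := by
    have hcs : ‖(A * B) * star (A * B)‖ = ‖A * B‖ * ‖A * B‖ := CStarRing.norm_self_mul_star
    rw [Matrix.star_eq_conjTranspose, hABA] at hcs
    rw [← hcs]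
    exact hSnorm
  have hd0 : (0 : ℝ) ≤ (1 / Real.sqrt 2) ^ t := by positivity
  have hd2 : ((1 / Real.sqrt 2) ^ t) * ((1 / Real.sqrt 2) ^ t) = c := by
    rw [← mul_pow, hc]
    congr 1
    rw [div_mul_div_comm, one_mul, Real.mul_self_sqrt (by norm_num)]
  have hd : ‖A * B‖ ≤ (1 / Real.sqrt 2) ^ t := by
    nlinarith [norm_nonneg (E := Matrix ((Fin n → Fin 2) × β × γ) ((Fin n → Fin 2) × β × γ) ℂ) (A * B), hABnorm]
  -- final assembly
  have hfin : PiOp θ * PiOp θ' = PiOp θ * (A * B) * PiOp θ' := by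
    conv_lhs => rw [← hPiA, ← hBPi]
    noncomm_ring
  have b1 : ‖PiOp θ‖ ≤ 1 := norm_proj_le_one (hPiHerm θ) (hPiProj θ)
  have b2 : ‖PiOp θ'‖ ≤ 1 := norm_proj_le_one (hPiHerm θ') (hPiProj θ')
  have hchain : ‖PiOp θ * (A * B) * PiOp θ'‖ ≤ ‖PiOp θ‖ * ‖A * B‖ * ‖PiOp θ'‖ := by
    refine le_trans (norm_mul_le _ _) ?_
    exact mul_le_mul_of_nonneg_right (norm_mul_le _ _) (norm_nonneg _)
  have : opNorm (PiOp θ * PiOp θ') = ‖PiOp θ * (A * B) * PiOp θ'‖ := by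
    rw [opNorm_eq, hfin]
  rw [this]
  have hABn : (0:ℝ) ≤ ‖A * B‖ := norm_nonneg _
  calc ‖PiOp θ * (A * B) * PiOp θ'‖ ≤ ‖PiOp θ‖ * ‖A * B‖ * ‖PiOp θ'‖ := hchain
  _ ≤ 1 * ‖A * B‖ * 1 := by
      have h1 : ‖PiOp θ‖ * ‖A * B‖ ≤ 1 * ‖A * B‖ :=
        mul_le_mul_of_nonneg_right b1 hABn
      have h2 : ‖PiOp θ‖ * ‖A * B‖ * ‖PiOp θ'‖ ≤ (1 * ‖A * B‖) * ‖PiOp θ'‖ :=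
        mul_le_mul_of_nonneg_right h1 (norm_nonneg _)
      refine h2.trans ?_
      have h3 : (1 * ‖A * B‖) * ‖PiOp θ'‖ ≤ (1 * ‖A * B‖) * 1 :=
        mul_le_mul_of_nonneg_left b2 (by linarith)
      linarith
  _ = ‖A * B‖ := by ring
  _ ≤ (1 / Real.sqrt 2) ^ t := hd
end

section
/- Let n ≥ 1, let θ, θ' ∈ {0,1}^n and let T be a set of coordinates on which θ and θ' differ (θ_k ≠ θ'_k for all k ∈ T), with |T| = t. For x ∈ {0,1}^n let G_x^{θ,T} be the matrix indexed by {0,1}^n with entries (G_x^{θ,T})_{i,j} = (∏_{k∈T} M(θ_k, x_k)_{i_k, j_k}) · (∏_{k∉T} [i_k = j_k]). Let {P_x^θ}_x be a projective POVM on a finite index type β and {Q_x^{θ'}}_x a projective POVM on a finite index type γ, and set P̄ = ∑_x G_x^{θ,T} ⊗ P_x^θ ⊗ 1_γ and Q̄ = ∑_x G_x^{θ',T} ⊗ 1_β ⊗ Q_x^{θ'}. Then P̄·Q̄·P̄ = 2^{−t}·P̄. -/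
open Matrix ComplexOrder Kronecker

/-- The matrix `G_x^{θ,T}`: the BB84 projector on the coordinates in `T`, tensored with the
identity on the remaining coordinates, written entrywise. -/
noncomputable def Gmat {n : ℕ} (θ : Fin n → Fin 2) (T : Finset (Fin n)) (x : Fin n → Fin 2) :
    Matrix (Fin n → Fin 2) (Fin n → Fin 2) ℂ :=
  Matrix.of fun i j =>
    (∏ k ∈ T, bb84M (θ k) (x k) (i k) (j k)) * ∏ k ∈ Tᶜ, (if i k = j k then 1 else 0)

section Aux

lemma std0 : Matrix.single (0 : Fin 2) 0 (1:ℂ) = !![1,0;0,0] := by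
  ext i j; fin_cases i <;> fin_cases j <;> simp [Matrix.single]

lemma std1 : Matrix.single (1 : Fin 2) 1 (1:ℂ) = !![0,0;0,1] := by
  ext i j; fin_cases i <;> fin_cases j <;> simp [Matrix.single]

lemma bb84M_explicit (θ x : Fin 2) :
    bb84M θ x = if θ = 0 then (if x = 0 then !![1,0;0,0] else !![0,0;0,1])
      else (2:ℂ)⁻¹ • (if x = 0 then !![1,1;1,1] else !![1,-1;-1,1]) := by
  have h2 : ((Real.sqrt 2 : ℝ) : ℂ) * ((Real.sqrt 2 : ℝ) : ℂ) = 2 := by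
    rw [← Complex.ofReal_mul, Real.mul_self_sqrt (by norm_num)]; norm_num
  have hs : (Real.sqrt 2 : ℂ) ≠ 0 := by
    intro h; rw [h, mul_zero] at h2; norm_num at h2
  fin_cases θ <;> fin_cases x <;>
    simp only [bb84M, std0, std1, Hmat, pow_zero, pow_one, Fin.isValue, one_mul, mul_one,
      Matrix.smul_mul, Matrix.mul_smul, Matrix.mul_fin_two, if_true, if_false,
      Fin.zero_eta, Fin.mk_one, smul_smul, reduceIte] <;>
    norm_num <;>
    (try rw [← mul_inv, h2]) <;> norm_num [← mul_inv, h2]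

lemma bb84_sandwich {θ₁ θ₂ : Fin 2} (h : θ₁ ≠ θ₂) (x y : Fin 2) :
    bb84M θ₁ x * bb84M θ₂ y * bb84M θ₁ x = (2:ℂ)⁻¹ • bb84M θ₁ x := by
  fin_cases θ₁ <;> fin_cases θ₂ <;> simp_all <;> fin_cases x <;> fin_cases y <;>
    simp only [bb84M_explicit, if_true, if_false, reduceIte, Matrix.smul_mul,
      Matrix.mul_smul, Matrix.mul_fin_two, smul_smul, Fin.isValue, one_ne_zero] <;>
    norm_num <;> (try congr 1) <;> funext i <;> fin_cases i <;> (try (funext j; fin_cases j)) <;> norm_num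

noncomputable def Gpi {n : ℕ} (A : Fin n → Matrix (Fin 2) (Fin 2) ℂ) :
    Matrix (Fin n → Fin 2) (Fin n → Fin 2) ℂ :=
  Matrix.of fun i j => ∏ k, A k (i k) (j k)

lemma Gpi_mul {n : ℕ} (A B : Fin n → Matrix (Fin 2) (Fin 2) ℂ) :
    Gpi A * Gpi B = Gpi (fun k => A k * B k) := by
  ext i j
  simp only [Gpi, Matrix.mul_apply, Matrix.of_apply]
  rw [Finset.sum_congr rfl (fun l _ => (Finset.prod_mul_distrib).symm),
    ← Fintype.prod_sum (fun k v => A k (i k) v * B k v (j k))]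

lemma Gpi_smul {n : ℕ} (c : Fin n → ℂ) (A : Fin n → Matrix (Fin 2) (Fin 2) ℂ) :
    Gpi (fun k => c k • A k) = (∏ k, c k) • Gpi A := by
  ext i j
  simp only [Gpi, Matrix.of_apply, Matrix.smul_apply, smul_eq_mul, ← Finset.prod_mul_distrib]

lemma Gmat_eq_Gpi {n : ℕ} (θ : Fin n → Fin 2) (T : Finset (Fin n)) (x : Fin n → Fin 2) :
    Gmat θ T x = Gpi (fun k => if k ∈ T then bb84M (θ k) (x k) else 1) := by
  ext i j
  simp only [Gmat, Gpi, Matrix.of_apply]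
  rw [← Finset.prod_mul_prod_compl T
    (fun k => (if k ∈ T then bb84M (θ k) (x k) else 1) (i k) (j k))]
  congr 1
  · exact Finset.prod_congr rfl fun k hk => by simp [hk]
  · refine Finset.prod_congr rfl fun k hk => ?_
    rw [Finset.mem_compl] at hk
    simp [hk, Matrix.one_apply]

lemma Gmat_sandwich {n : ℕ} {θ θ' : Fin n → Fin 2} {T : Finset (Fin n)}
    (hT : ∀ k ∈ T, θ k ≠ θ' k) (x y : Fin n → Fin 2) :
    Gmat θ T x * Gmat θ' T y * Gmat θ T x = ((2:ℂ)⁻¹ ^ T.card) • Gmat θ T x := by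
  rw [Gmat_eq_Gpi, Gmat_eq_Gpi θ', Gpi_mul, Gpi_mul]
  have key : (fun k => (if k ∈ T then bb84M (θ k) (x k) else 1) *
        (if k ∈ T then bb84M (θ' k) (y k) else 1) * (if k ∈ T then bb84M (θ k) (x k) else 1))
      = fun k => (if k ∈ T then (2:ℂ)⁻¹ else 1) •
        (if k ∈ T then bb84M (θ k) (x k) else 1) := by
    funext k
    by_cases hk : k ∈ T
    · simp only [hk, if_true]; exact bb84_sandwich (hT k hk) _ _
    · simp [hk]
  rw [key, Gpi_smul]
  congr 1
  rw [Finset.prod_ite_mem, Finset.univ_inter, Finset.prod_const]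

lemma quad_sum {β ι : Type*} [Fintype β] (s : Finset ι) (f : ι → Matrix β β ℂ) (v : β → ℂ) :
    star v ⬝ᵥ (∑ w ∈ s, f w) *ᵥ v = ∑ w ∈ s, star v ⬝ᵥ (f w) *ᵥ v := by
  classical
  induction s using Finset.cons_induction with
  | empty => simp [Matrix.zero_mulVec]
  | cons a s ha ih => rw [Finset.cons_eq_insert] at *; simp [Finset.sum_insert ha,
      Matrix.add_mulVec, dotProduct_add, ih]

lemma povm_orth {ι β : Type*} [Fintype ι] [DecidableEq ι] [Fintype β] [DecidableEq β]
    {P : ι → Matrix β β ℂ} (hP : IsProjPOVM P) {x z : ι} (hxz : z ≠ x) :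
    P x * P z = 0 := by
  obtain ⟨hproj, hsum⟩ := hP
  have hsum' : ∑ w, P x * P w * P x = P x := by
    rw [← Finset.sum_mul, ← Finset.mul_sum, hsum, mul_one, (hproj x).2]
  have hform : ∀ w, P x * P w * P x = (P w * P x)ᴴ * (P w * P x) := by
    intro w
    rw [Matrix.conjTranspose_mul, (hproj x).1, (hproj w).1, Matrix.mul_assoc,
      Matrix.mul_assoc, ← Matrix.mul_assoc (P w), (hproj w).2]
  have hx3 : P x * P x * P x = P x := by rw [(hproj x).2, (hproj x).2]
  have e1 := Finset.add_sum_erase Finset.univ (fun w => P x * P w * P x) (Finset.mem_univ x)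
  simp only [hsum'] at e1
  rw [hx3, add_eq_left] at e1
  have hz : P z * P x = 0 := by
    have hBv : ∀ v : β → ℂ, (P z * P x) *ᵥ v = 0 := by
      intro v
      have hterm : ∀ w ∈ Finset.univ.erase x,
          (0:ℂ) ≤ star v ⬝ᵥ (P x * P w * P x) *ᵥ v := fun w _ => by
        rw [hform w]; exact (Matrix.posSemidef_conjTranspose_mul_self (P w * P x)).dotProduct_mulVec_nonneg v
      have hs : ∑ w ∈ Finset.univ.erase x, star v ⬝ᵥ (P x * P w * P x) *ᵥ v = 0 := by
        rw [← quad_sum, e1]; simp [Matrix.zero_mulVec]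
      have h0 := (Finset.sum_eq_zero_iff_of_nonneg hterm).mp hs z
        (Finset.mem_erase.mpr ⟨hxz, Finset.mem_univ z⟩)
      rw [hform z, ← Matrix.mulVec_mulVec, Matrix.dotProduct_mulVec,
        Matrix.vecMul_conjTranspose, star_star] at h0
      exact dotProduct_star_self_eq_zero.mp h0
    ext i j
    have := congrFun (hBv (Pi.single j 1)) i
    simpa [Matrix.mulVec_single] using this
  calc P x * P z = (P z * P x)ᴴ := by
        rw [Matrix.conjTranspose_mul, (hproj x).1, (hproj z).1]
    _ = 0 := by rw [hz]; simp

lemma kron_sum_right {l m p q ι : Type*} (A : Matrix l m ℂ) (s : Finset ι)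
    (f : ι → Matrix p q ℂ) : A ⊗ₖ (∑ i ∈ s, f i) = ∑ i ∈ s, A ⊗ₖ f i := by
  ext ⟨i, i'⟩ ⟨j, j'⟩
  simp only [Matrix.kroneckerMap_apply, Finset.sum_apply, Matrix.sum_apply, Finset.mul_sum]

end Aux

theorem stmt8 (n : ℕ) (hn : 1 ≤ n) (θ θ' : Fin n → Fin 2)
    (T : Finset (Fin n)) (hT : ∀ k ∈ T, θ k ≠ θ' k) (t : ℕ) (ht : T.card = t)
    {β γ : Type*} [Fintype β] [DecidableEq β] [Fintype γ] [DecidableEq γ]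
    (P : (Fin n → Fin 2) → Matrix β β ℂ) (hP : IsProjPOVM P)
    (Q : (Fin n → Fin 2) → Matrix γ γ ℂ) (hQ : IsProjPOVM Q)
    (Pbar : Matrix ((Fin n → Fin 2) × β × γ) ((Fin n → Fin 2) × β × γ) ℂ)
    (Qbar : Matrix ((Fin n → Fin 2) × β × γ) ((Fin n → Fin 2) × β × γ) ℂ)
    (hPbar : Pbar = ∑ x : Fin n → Fin 2, Gmat θ T x ⊗ₖ (P x ⊗ₖ (1 : Matrix γ γ ℂ)))
    (hQbar : Qbar = ∑ x : Fin n → Fin 2, Gmat θ' T x ⊗ₖ ((1 : Matrix β β ℂ) ⊗ₖ Q x)) :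
    Pbar * Qbar * Pbar = ((2 : ℂ)⁻¹ ^ t) • Pbar := by
  subst hPbar hQbar ht
  calc (∑ x : Fin n → Fin 2, Gmat θ T x ⊗ₖ (P x ⊗ₖ (1 : Matrix γ γ ℂ))) *
          (∑ y : Fin n → Fin 2, Gmat θ' T y ⊗ₖ ((1 : Matrix β β ℂ) ⊗ₖ Q y)) *
          ∑ z : Fin n → Fin 2, Gmat θ T z ⊗ₖ (P z ⊗ₖ (1 : Matrix γ γ ℂ))
      = ∑ x : Fin n → Fin 2, ∑ y : Fin n → Fin 2, ∑ z : Fin n → Fin 2,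
          (Gmat θ T x * Gmat θ' T y * Gmat θ T z) ⊗ₖ ((P x * P z) ⊗ₖ Q y) := by
        rw [Finset.sum_mul_sum, Finset.sum_mul]
        refine Finset.sum_congr rfl fun x _ => ?_
        rw [Finset.sum_mul]
        refine Finset.sum_congr rfl fun y _ => ?_
        rw [Finset.mul_sum]
        refine Finset.sum_congr rfl fun z _ => ?_
        simp only [← Matrix.mul_kronecker_mul, Matrix.one_mul, Matrix.mul_one]
    _ = ∑ x : Fin n → Fin 2, ∑ y : Fin n → Fin 2,
          (Gmat θ T x * Gmat θ' T y * Gmat θ T x) ⊗ₖ ((P x * P x) ⊗ₖ Q y) := by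
        refine Finset.sum_congr rfl fun x _ => Finset.sum_congr rfl fun y _ => ?_
        refine Finset.sum_eq_single x (fun z _ hzx => ?_) (by simp)
        rw [povm_orth hP hzx, Matrix.zero_kronecker, Matrix.kronecker_zero]
    _ = ((2:ℂ)⁻¹ ^ T.card) • ∑ x : Fin n → Fin 2,
          Gmat θ T x ⊗ₖ (P x ⊗ₖ (1 : Matrix γ γ ℂ)) := by
        rw [Finset.smul_sum]
        refine Finset.sum_congr rfl fun x _ => ?_
        conv_rhs => rw [← hQ.2, kron_sum_right (P x), kron_sum_right (Gmat θ T x),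
          Finset.smul_sum]
        refine Finset.sum_congr rfl fun y _ => ?_
        rw [Gmat_sandwich hT, (hP.1 x).2, Matrix.smul_kronecker]
end
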